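/- Let d ≥ 2 and r ≥ 2 be integers, let ε ∈ ℂ be a primitive d-th root of unity with ε^r = ε or ε^r = ε⁻¹, let σ ∈ {1, −1}, u ∈ ℂ∖{0}, v ∈ ℂ, and set l(x) = ux + v. Let h₁ = l∘(σ·T_r)∘l⁻¹ ∈ ℂ[x]. Then the conic C_{ε,u,v} is invariant under the coordinatewise map (h₁, h₁): for every (x,y) ∈ C_{ε,u,v}, also (h₁(x), h₁(y)) ∈ C_{ε,u,v}. -/

import Mathlib

/-!
Conjugating by `l` carries `C_{ε,u,v}` to the conic `C_{ε,1,0}`, i.e. `a² + b² - (ε + ε⁻¹)ab +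
(ε - ε⁻¹)² = 0`, and `h₁` to `σ T_r`. In the Joukowsky coordinate `a = z + z⁻¹` this conic is
parametrized by `(z + z⁻¹, ηz + (ηz)⁻¹)` with `η ∈ {ε, ε⁻¹}`, and `σ T_r` acts on the parameters by
`z ↦ σ z^r`, sending the branch `η` to the branch `η^r ∈ {ε, ε⁻¹}`.
-/

open Polynomial

/-- The conic `C_{ε,u,v}`. -/
def conicSet (ε u v : ℂ) : Set (ℂ × ℂ) :=
  {p | p.2 ^ 2 + (ε + ε⁻¹ - 2) * v * (p.1 + p.2) - (ε + ε⁻¹) * p.1 * p.2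
    + p.1 ^ 2 + (2 - ε - ε⁻¹) * v ^ 2 + (ε - ε⁻¹) ^ 2 * u ^ 2 = 0}

lemma conicSet_inv (ε u v : ℂ) : conicSet ε⁻¹ u v = conicSet ε u v := by
  ext p
  simp only [conicSet, Set.mem_ofPred_eq, inv_inv]
  ring_nf

lemma mem_conicSet_iff {u : ℂ} (hu : u ≠ 0) (ε v : ℂ) (p : ℂ × ℂ) :
    p ∈ conicSet ε u v ↔ (u⁻¹ * (p.1 - v), u⁻¹ * (p.2 - v)) ∈ conicSet ε 1 0 := by
  obtain ⟨x, y⟩ := p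
  simp only [conicSet, Set.mem_ofPred_eq]
  set a := u⁻¹ * (x - v)
  set b := u⁻¹ * (y - v)
  have hx : x = u * a + v := by simp only [a]; field_simp; ring
  have hy : y = u * b + v := by simp only [b]; field_simp; ring
  rw [hx, hy]
  constructor <;> intro h
  · refine (mul_eq_zero.mp ?_).resolve_left (pow_ne_zero 2 hu)
    linear_combination h
  · linear_combination u ^ 2 * h

lemma exists_ne_zero_add_inv_eq (a : ℂ) : ∃ z : ℂ, z ≠ 0 ∧ z + z⁻¹ = a := by
  obtain ⟨q, hq⟩ := IsAlgClosed.exists_pow_nat_eq (a ^ 2 - 4) two_pos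
  have hmul : (a + q) / 2 * ((a - q) / 2) = 1 := by linear_combination (-1 / 4 : ℂ) * hq
  refine ⟨(a + q) / 2, left_ne_zero_of_mul_eq_one hmul, ?_⟩
  rw [inv_eq_of_mul_eq_one_right hmul]
  ring

lemma add_inv_mem_conicSet_one_zero {ε η w : ℂ} (hε : ε ≠ 0) (hη : η = ε ∨ η = ε⁻¹)
    (hw : w ≠ 0) : (w + w⁻¹, η * w + (η * w)⁻¹) ∈ conicSet ε 1 0 := by
  have key : ∀ ζ : ℂ, ζ ≠ 0 → (w + w⁻¹, ζ * w + (ζ * w)⁻¹) ∈ conicSet ζ 1 0 := by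
    intro ζ hζ
    simp only [conicSet, Set.mem_ofPred_eq]
    field_simp
    ring
  rcases hη with rfl | rfl
  · exact key η hε
  · rw [← conicSet_inv]
    exact key ε⁻¹ (inv_ne_zero hε)

lemma exists_of_mem_conicSet_one_zero {ε a b : ℂ} (hε : ε ≠ 0)
    (h : (a, b) ∈ conicSet ε 1 0) :
    ∃ z : ℂ, z ≠ 0 ∧ ∃ η : ℂ, (η = ε ∨ η = ε⁻¹) ∧ a = z + z⁻¹ ∧ b = η * z + (η * z)⁻¹ := by
  obtain ⟨z, hz, rfl⟩ := exists_ne_zero_add_inv_eq a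
  -- the equation of the conic factors once `a` is written as `z + z⁻¹`
  have hfac : (b - (ε * z + (ε * z)⁻¹)) * (b - (ε⁻¹ * z + (ε⁻¹ * z)⁻¹)) = 0 := by
    simp only [conicSet, Set.mem_ofPred_eq] at h
    rw [← h]
    field_simp
    ring
  rcases mul_eq_zero.mp hfac with hb | hb
  · exact ⟨z, hz, ε, .inl rfl, rfl, sub_eq_zero.mp hb⟩
  · exact ⟨z, hz, ε⁻¹, .inr rfl, rfl, sub_eq_zero.mp hb⟩

section Chebyshev

variable {P : ℂ[X]} {r : ℕ} {σ : ℂ}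

lemma mul_eval_add_inv (hP : ∀ z : ℂ, z ≠ 0 → P.eval (z + z⁻¹) = z ^ r + z⁻¹ ^ r)
    (hσ : σ = 1 ∨ σ = -1) {z : ℂ} (hz : z ≠ 0) :
    σ * P.eval (z + z⁻¹) = σ * z ^ r + (σ * z ^ r)⁻¹ := by
  rw [hP z hz, mul_inv, inv_pow]
  rcases hσ with rfl | rfl <;> ring

lemma pow_eq_or_eq_inv {ε η : ℂ} (hεr : ε ^ r = ε ∨ ε ^ r = ε⁻¹) (hη : η = ε ∨ η = ε⁻¹) :
    η ^ r = ε ∨ η ^ r = ε⁻¹ := by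
  rcases hη with rfl | rfl
  · exact hεr
  · rw [inv_pow, inv_inj, inv_eq_iff_eq_inv]
    exact hεr.symm

lemma mapsTo_conicSet_one_zero (hP : ∀ z : ℂ, z ≠ 0 → P.eval (z + z⁻¹) = z ^ r + z⁻¹ ^ r)
    (hσ : σ = 1 ∨ σ = -1) {ε : ℂ} (hε : ε ≠ 0) (hεr : ε ^ r = ε ∨ ε ^ r = ε⁻¹) :
    Set.MapsTo (fun p : ℂ × ℂ ↦ (σ * P.eval p.1, σ * P.eval p.2))
      (conicSet ε 1 0) (conicSet ε 1 0) := by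
  rintro ⟨a, b⟩ hab
  obtain ⟨z, hz, η, hη, rfl, rfl⟩ := exists_of_mem_conicSet_one_zero hε hab
  have hηz : η * z ≠ 0 := mul_ne_zero (by rcases hη with rfl | rfl <;> simp [hε]) hz
  have hb : σ * (η * z) ^ r = η ^ r * (σ * z ^ r) := by ring
  have hw : σ * z ^ r ≠ 0 := by rcases hσ with rfl | rfl <;> simp [hz]
  dsimp only
  rw [mul_eval_add_inv hP hσ hz, mul_eval_add_inv hP hσ hηz, hb]
  exact add_inv_mem_conicSet_one_zero hε (pow_eq_or_eq_inv hεr hη) hw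

end Chebyshev

lemma inv_mul_sub_eval_conj {u : ℂ} (hu : u ≠ 0) (v : ℂ) (P : ℂ[X]) (x : ℂ) :
    u⁻¹ * (((C u * X + C v).comp (P.comp (C u⁻¹ * (X - C v)))).eval x - v) =
      P.eval (u⁻¹ * (x - v)) := by
  simp only [eval_comp, eval_add, eval_mul, eval_C, eval_X, eval_sub, add_sub_cancel_right]
  field_simp

theorem stmt16_general
    (T : ℕ → Polynomial ℂ)
    (hT : ∀ (r : ℕ) (z : ℂ), z ≠ 0 → (T r).eval (z + z⁻¹) = z ^ r + z⁻¹ ^ r)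
    (d r : ℕ) (hd : 2 ≤ d)
    (ε : ℂ) (hε : IsPrimitiveRoot ε d) (hεr : ε ^ r = ε ∨ ε ^ r = ε⁻¹)
    (σ : ℂ) (hσ : σ = 1 ∨ σ = -1)
    (u : ℂ) (hu : u ≠ 0) (v : ℂ)
    (h₁ : Polynomial ℂ)
    (hh₁ : h₁ = (C u * X + C v).comp ((C σ * T r).comp (C u⁻¹ * (X - C v)))) :
    ∀ p ∈ conicSet ε u v, (h₁.eval p.1, h₁.eval p.2) ∈ conicSet ε u v := by
  intro p hp
  subst hh₁
  rw [mem_conicSet_iff hu] at hp ⊢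
  simp only [inv_mul_sub_eval_conj hu, eval_mul, eval_C]
  exact (mapsTo_conicSet_one_zero (hT r) hσ (hε.ne_zero (by omega)) hεr hp :)

theorem stmt16
    (T : ℕ → Polynomial ℂ)
    (hT : ∀ (r : ℕ) (z : ℂ), z ≠ 0 → (T r).eval (z + z⁻¹) = z ^ r + z⁻¹ ^ r)
    (d r : ℕ) (hd : 2 ≤ d) (hr : 2 ≤ r)
    (ε : ℂ) (hε : IsPrimitiveRoot ε d) (hεr : ε ^ r = ε ∨ ε ^ r = ε⁻¹)
    (σ : ℂ) (hσ : σ = 1 ∨ σ = -1)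
    (u : ℂ) (hu : u ≠ 0) (v : ℂ)
    (h₁ : Polynomial ℂ)
    (hh₁ : h₁ = (C u * X + C v).comp ((C σ * T r).comp (C u⁻¹ * (X - C v)))) :
    ∀ p ∈ conicSet ε u v, (h₁.eval p.1, h₁.eval p.2) ∈ conicSet ε u v :=
  stmt16_general T hT d r hd ε hε hεr σ hσ u hu v h₁ hh₁
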